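/- arXiv:2011.10618 — 4 statements merged into one kernel-verified Lean document; each statement's English description precedes it below -/
import Mathlib

section
/- Let A, A', B, B' be partial orders and let (up_A, down_A) be an embedding-projection pair from A to A' and (up_B, down_B) an embedding-projection pair from B to B'. On the partial orders A →o B and A' →o B' of monotone maps with the pointwise order, define up_Π f := up_B ∘ f ∘ down_A and down_Π g := down_B ∘ g ∘ up_A. Then up_Π and down_Π are well-defined monotone maps, (up_Π, down_Π) is an embedding-projection pair from A →o B to A' →o B' (in particular down_Π (up_Π f) = f for every f), and its underlying relation is characterized by: up_Π f ≤ g if and only if for all a : A and a' : A' with up_A a ≤ a', one has up_B (f a) ≤ g a'. -/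
/-- `up_Π f := up_B ∘ f ∘ down_A`, a monotone map between monotone function spaces. -/
def upPi {A A' B B' : Type*} [PartialOrder A] [PartialOrder A']
    [PartialOrder B] [PartialOrder B']
    (upB : B →o B') (downA : A' →o A) (f : A →o B) : A' →o B' :=
  (upB.comp f).comp downA

/-- `down_Π g := down_B ∘ g ∘ up_A`, a monotone map between monotone function spaces. -/
def downPi {A A' B B' : Type*} [PartialOrder A] [PartialOrder A']
    [PartialOrder B] [PartialOrder B']
    (downB : B' →o B) (upA : A →o A') (g : A' →o B') : A →o B :=
  (downB.comp g).comp upA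

/-- ep-pairs on the domain and codomain induce an ep-pair between
the monotone function spaces (with the pointwise order), whose underlying
relation relates `f` to `g` iff related arguments are sent to related results. -/
theorem stmt4 {A A' B B' : Type*} [PartialOrder A] [PartialOrder A']
    [PartialOrder B] [PartialOrder B']
    (upA : A →o A') (downA : A' →o A) (upB : B →o B') (downB : B' →o B)
    (gcA : GaloisConnection upA downA) (gcB : GaloisConnection upB downB)
    (retrA : ∀ a : A, downA (upA a) = a) (retrB : ∀ b : B, downB (upB b) = b) :
    Monotone (upPi upB downA) ∧ Monotone (downPi downB upA) ∧
      GaloisConnection (upPi upB downA) (downPi downB upA) ∧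
      (∀ f : A →o B, downPi downB upA (upPi upB downA f) = f) ∧
      (∀ (f : A →o B) (g : A' →o B'),
        upPi upB downA f ≤ g ↔ ∀ (a : A) (a' : A'), upA a ≤ a' → upB (f a) ≤ g a') := by
  refine ⟨fun f g h a' => upB.mono (h (downA a')), fun f g h a => downB.mono (h (upA a)),
    ?_, ?_, ?_⟩
  · intro f g
    constructor
    · intro h a
      simp only [downPi, OrderHom.comp_coe, Function.comp_apply]
      exact (gcB _ _).mp ((h (upA a)).trans' (upB.mono (f.mono (le_of_eq (retrA a).symm))))
    · intro h a'
      simp only [upPi, OrderHom.comp_coe, Function.comp_apply]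
      exact (gcB _ _).mpr ((h (downA a')).trans (downB.mono (g.mono ((gcA _ _).mpr le_rfl))))
  · intro f
    ext a
    simp [upPi, downPi, retrA a, retrB (f a)]
  · intro f g
    constructor
    · intro h a a' haa'
      exact (upB.mono (f.mono ((gcA _ _).mp haa'))).trans (h a')
    · intro h a'
      exact h (downA a') a' ((gcA _ _).mpr le_rfl)
end

section
/- Let A, A', B, B' be partial orders and let (up_A, down_A) be an embedding-projection pair from A to A' and (up_B, down_B) an embedding-projection pair from B to B'. Equip A × B and A' × B' with the product order, and form the extended pair types WithBot (WithTop (A × B)) and WithBot (WithTop (A' × B')), i.e., the product orders extended with a new least element err and a new greatest element unk. Define up and down on the extended types by acting componentwise on embedded pairs (up sends (a, b) to (up_A a, up_B b), down sends (a', b') to (down_A a', down_B b')) and sending err to err and unk to unk. Then (up, down) is an embedding-projection pair between the extended pair types, and on embedded pairs its underlying relation is the conjunction of the component relations: up applied to (a, b) is ≤ the embedding of (a', b') if and only if up_A a ≤ a' and up_B b ≤ b'. -/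
/-- The componentwise action on extended pair types, sending `err` (the new
bottom) to `err` and `unk` (the new top) to `unk`. -/
def extMap {A B A' B' : Type*} (fA : A → A') (fB : B → B') :
    WithBot (WithTop (A × B)) → WithBot (WithTop (A' × B')) :=
  WithBot.map (WithTop.map (Prod.map fA fB))

namespace GaloisConnection

variable {α β γ δ : Type*} [Preorder α] [Preorder β] [Preorder γ] [Preorder δ]

theorem prodMap {l₁ : α → β} {u₁ : β → α} {l₂ : γ → δ} {u₂ : δ → γ}
    (gc₁ : GaloisConnection l₁ u₁) (gc₂ : GaloisConnection l₂ u₂) :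
    GaloisConnection (Prod.map l₁ l₂) (Prod.map u₁ u₂) :=
  fun x y => and_congr (gc₁ x.1 y.1) (gc₂ x.2 y.2)

theorem withBot_map {l : α → β} {u : β → α} (gc : GaloisConnection l u) :
    GaloisConnection (WithBot.map l) (WithBot.map u)
  | ⊥, _ => by simp
  | (_ : α), ⊥ => by simp
  | (a : α), (b : β) => by simpa using gc a b

theorem withTop_map {l : α → β} {u : β → α} (gc : GaloisConnection l u) :
    GaloisConnection (WithTop.map l) (WithTop.map u)
  | _, ⊤ => by simp
  | ⊤, (_ : β) => by simp
  | (a : α), (b : β) => by simpa using gc a b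

end GaloisConnection

section extMap

variable {A A' A'' B B' B'' : Type*}

@[simp]
theorem extMap_coe (fA : A → A') (fB : B → B') (a : A) (b : B) :
    extMap fA fB (((a, b) : A × B) : WithBot (WithTop (A × B))) =
      ((((fA a, fB b) : A' × B') : WithTop (A' × B')) : WithBot (WithTop (A' × B'))) :=
  rfl

theorem extMap_id : extMap (id : A → A) (id : B → B) = id := by
  simp [extMap, Prod.map_id, WithTop.map_id, WithBot.map_id]

theorem extMap_extMap (fA : A → A') (fB : B → B') (gA : A' → A'') (gB : B' → B'')
    (x : WithBot (WithTop (A × B))) :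
    extMap gA gB (extMap fA fB x) = extMap (gA ∘ fA) (gB ∘ fB) x := by
  simp [extMap, WithBot.map_map, Prod.map_comp_map]

theorem extMap_leftInverse {fA : A → A'} {fB : B → B'} {gA : A' → A} {gB : B' → B}
    (hA : Function.LeftInverse gA fA) (hB : Function.LeftInverse gB fB) :
    Function.LeftInverse (extMap gA gB) (extMap fA fB) := fun x => by
  rw [extMap_extMap, hA.comp_eq_id, hB.comp_eq_id, extMap_id, id]

theorem extMap_galoisConnection [Preorder A] [Preorder A'] [Preorder B] [Preorder B']
    {upA : A → A'} {downA : A' → A} {upB : B → B'} {downB : B' → B}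
    (gcA : GaloisConnection upA downA) (gcB : GaloisConnection upB downB) :
    GaloisConnection (extMap upA upB) (extMap downA downB) :=
  (gcA.prodMap gcB).withTop_map.withBot_map

end extMap

theorem stmt6_general {A A' B B' : Type*} [PartialOrder A] [PartialOrder A']
    [PartialOrder B] [PartialOrder B']
    (upA : A → A') (downA : A' → A) (upB : B → B') (downB : B' → B)
    (gcA : GaloisConnection upA downA) (gcB : GaloisConnection upB downB)
    (retrA : ∀ a : A, downA (upA a) = a) (retrB : ∀ b : B, downB (upB b) = b) :
    extMap upA upB ⊥ = ⊥ ∧ extMap upA upB ⊤ = ⊤ ∧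
    extMap downA downB ⊥ = ⊥ ∧ extMap downA downB ⊤ = ⊤ ∧
    Monotone (extMap upA upB) ∧ Monotone (extMap downA downB) ∧
    GaloisConnection (extMap upA upB) (extMap downA downB) ∧
    (∀ x : WithBot (WithTop (A × B)), extMap downA downB (extMap upA upB x) = x) ∧
    (∀ (a : A) (b : B) (a' : A') (b' : B'),
      extMap upA upB (((a, b) : A × B) : WithBot (WithTop (A × B))) ≤
        ((((a', b') : A' × B') : WithTop (A' × B')) : WithBot (WithTop (A' × B'))) ↔
      upA a ≤ a' ∧ upB b ≤ b') := by
  have gc := extMap_galoisConnection gcA gcB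
  refine ⟨rfl, rfl, rfl, rfl, gc.monotone_l, gc.monotone_u, gc,
    extMap_leftInverse retrA retrB, fun a b a' b' => ?_⟩
  simp only [extMap_coe, WithBot.coe_le_coe, WithTop.coe_le_coe, Prod.mk_le_mk]

/-- ep-pairs between the components induce an ep-pair between the
extended pair types `WithBot (WithTop (A × B))` and `WithBot (WithTop (A' × B'))`,
acting componentwise on embedded pairs and sending `err` to `err` and `unk` to
`unk`; on embedded pairs its underlying relation is the conjunction of the
component relations. -/
theorem stmt6 {A A' B B' : Type*} [PartialOrder A] [PartialOrder A']
    [PartialOrder B] [PartialOrder B']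
    (upA : A → A') (downA : A' → A) (upB : B → B') (downB : B' → B)
    (hupA : Monotone upA) (hdownA : Monotone downA)
    (hupB : Monotone upB) (hdownB : Monotone downB)
    (gcA : GaloisConnection upA downA) (gcB : GaloisConnection upB downB)
    (retrA : ∀ a : A, downA (upA a) = a) (retrB : ∀ b : B, downB (upB b) = b) :
    extMap upA upB ⊥ = ⊥ ∧ extMap upA upB ⊤ = ⊤ ∧
    extMap downA downB ⊥ = ⊥ ∧ extMap downA downB ⊤ = ⊤ ∧
    Monotone (extMap upA upB) ∧ Monotone (extMap downA downB) ∧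
    GaloisConnection (extMap upA upB) (extMap downA downB) ∧
    (∀ x : WithBot (WithTop (A × B)), extMap downA downB (extMap upA upB x) = x) ∧
    (∀ (a : A) (b : B) (a' : A') (b' : B'),
      extMap upA upB (((a, b) : A × B) : WithBot (WithTop (A × B))) ≤
        ((((a', b') : A' × B') : WithTop (A' × B')) : WithBot (WithTop (A' × B'))) ↔
      upA a ≤ a' ∧ upB b ≤ b') :=
  stmt6_general upA downA upB downB gcA gcB retrA retrB
end

section
/- Let H be a type with decidable equality and X : H → Type a family such that each X h is a partial order with a least element ⊥ₕ and a greatest element ⊤ₕ. Then the precision relation ⊑ on the coalesced sum 𝕌 is well-defined on the quotient and is a partial order on 𝕌 (reflexive, transitive, and antisymmetric), with least element [err] and greatest element [unk] (in particular z ⊑ [unk] for every z : 𝕌). -/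
/-- The three-way sum underlying the coalesced sum: an error element, an
unknown element, and injections `⟨h ; x⟩`. -/
inductive Pre (H : Type*) (X : H → Type*) where
  | err : Pre H X
  | unk : Pre H X
  | inj : (h : H) → X h → Pre H X

variable (H : Type*) (X : H → Type*) [∀ h, PartialOrder (X h)] [∀ h, OrderBot (X h)]

/-- The relation identifying `⟨h ; ⊥ₕ⟩` with `err` for every `h`. -/
def preRel : Pre H X → Pre H X → Prop :=
  fun a b => (∃ h : H, a = Pre.inj h ⊥) ∧ b = Pre.err

/-- The coalesced sum `𝕌`: the quotient of the three-way sum by the smallest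
equivalence relation identifying `⟨h ; ⊥ₕ⟩` with `err`. -/
def U : Type _ := Quot (preRel H X)

/-- The quotient map `[·]`. -/
def emb : Pre H X → U H X := Quot.mk _

/-- The precision relation `⊑` on the coalesced sum `𝕌`, generated by:
`[err] ⊑ z`; `[unk] ⊑ [unk]`; `[⟨h ; x⟩] ⊑ [unk]`; and
`[⟨h ; x⟩] ⊑ [⟨h ; x'⟩]` whenever `x ≤ x'`. -/
inductive ULe : U H X → U H X → Prop where
  | err_le (z : U H X) : ULe (emb H X Pre.err) z
  | unk_le_unk : ULe (emb H X Pre.unk) (emb H X Pre.unk)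
  | inj_le_unk (h : H) (x : X h) : ULe (emb H X (Pre.inj h x)) (emb H X Pre.unk)
  | inj_le_inj (h : H) (x x' : X h) : x ≤ x' →
      ULe (emb H X (Pre.inj h x)) (emb H X (Pre.inj h x'))

section Aux

/-- "err-like" elements: `err` and `⟨h ; ⊥⟩`. -/
def ErrLike : Pre H X → Prop :=
  fun a => a = Pre.err ∨ ∃ h : H, a = Pre.inj h ⊥

/-- The equivalence relation generated by `preRel`. -/
def PreEq : Pre H X → Pre H X → Prop :=
  fun a b => a = b ∨ (ErrLike H X a ∧ ErrLike H X b)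

lemma preEq_of_emb_eq {a b : Pre H X} (hab : emb H X a = emb H X b) :
    PreEq H X a b := by
  have lift : U H X → Prop := Quot.lift (PreEq H X a) (by
    rintro c d ⟨⟨h, rfl⟩, rfl⟩
    apply propext
    constructor
    · rintro (rfl | ⟨ha, _⟩)
      · exact Or.inr ⟨Or.inr ⟨h, rfl⟩, Or.inl rfl⟩
      · exact Or.inr ⟨ha, Or.inl rfl⟩
    · rintro (rfl | ⟨ha, _⟩)
      · exact Or.inr ⟨Or.inl rfl, Or.inr ⟨h, rfl⟩⟩
      · exact Or.inr ⟨ha, Or.inr ⟨h, rfl⟩⟩)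
  have := congrArg (Quot.lift (PreEq H X a) (by
    rintro c d ⟨⟨h, rfl⟩, rfl⟩
    apply propext
    constructor
    · rintro (rfl | ⟨ha, _⟩)
      · exact Or.inr ⟨Or.inr ⟨h, rfl⟩, Or.inl rfl⟩
      · exact Or.inr ⟨ha, Or.inl rfl⟩
    · rintro (rfl | ⟨ha, _⟩)
      · exact Or.inr ⟨Or.inl rfl, Or.inr ⟨h, rfl⟩⟩
      · exact Or.inr ⟨ha, Or.inr ⟨h, rfl⟩⟩)) hab
  simp only [emb] at this
  exact this ▸ Or.inl rfl

lemma emb_bot (h : H) : emb H X (Pre.inj h ⊥) = emb H X Pre.err :=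
  Quot.sound ⟨⟨h, rfl⟩, rfl⟩

lemma inj_eq_err {h : H} {x : X h}
    (e : emb H X (Pre.inj h x) = emb H X Pre.err) : x = ⊥ := by
  rcases preEq_of_emb_eq H X e with h' | ⟨h1, _⟩
  · cases h'
  · rcases h1 with h1 | ⟨h2, h1⟩
    · cases h1
    · cases h1; rfl

lemma unk_ne_err : emb H X Pre.unk ≠ emb H X Pre.err := by
  intro e
  rcases preEq_of_emb_eq H X e with h' | ⟨h1, _⟩
  · cases h'
  · rcases h1 with h1 | ⟨h2, h1⟩ <;> cases h1

lemma inj_ne_unk {h : H} {x : X h} :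
    emb H X (Pre.inj h x) ≠ emb H X Pre.unk := by
  intro e
  rcases preEq_of_emb_eq H X e with h' | ⟨_, h2⟩
  · cases h'
  · rcases h2 with h2 | ⟨h3, h2⟩ <;> cases h2

lemma inj_eq_inj {h h' : H} {x : X h} {x' : X h'}
    (e : emb H X (Pre.inj h x) = emb H X (Pre.inj h' x')) :
    (Pre.inj h x = Pre.inj h' x') ∨ (x = ⊥ ∧ x' = ⊥) := by
  rcases preEq_of_emb_eq H X e with h1 | ⟨h1, h2⟩
  · exact Or.inl h1
  · right
    constructor
    · rcases h1 with h1 | ⟨h3, h1⟩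
      · cases h1
      · cases h1; rfl
    · rcases h2 with h2 | ⟨h3, h2⟩
      · cases h2
      · cases h2; rfl

end Aux

lemma ule_inv {u v : U H X} (huv : ULe H X u v) :
    u = emb H X Pre.err ∨
    (u = emb H X Pre.unk ∧ v = emb H X Pre.unk) ∨
    (∃ h' : H, ∃ x : X h', u = emb H X (Pre.inj h' x) ∧ v = emb H X Pre.unk) ∨
    (∃ h' : H, ∃ x x' : X h', x ≤ x' ∧ u = emb H X (Pre.inj h' x) ∧
      v = emb H X (Pre.inj h' x')) := by
  cases huv with
  | err_le w => exact Or.inl rfl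
  | unk_le_unk => exact Or.inr (Or.inl ⟨rfl, rfl⟩)
  | inj_le_unk h x => exact Or.inr (Or.inr (Or.inl ⟨h, x, rfl, rfl⟩))
  | inj_le_inj h x x' hxx' => exact Or.inr (Or.inr (Or.inr ⟨h, x, x', hxx', rfl, rfl⟩))

/-- the precision relation on the coalesced sum is well-defined on
the quotient and is a partial order with least element `[err]` and greatest
element `[unk]`. -/
theorem stmt7 [DecidableEq H] [∀ h, OrderTop (X h)] :
    (∀ a a' b b' : Pre H X, emb H X a = emb H X a' → emb H X b = emb H X b' →
      (ULe H X (emb H X a) (emb H X b) ↔ ULe H X (emb H X a') (emb H X b'))) ∧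
    (∀ z : U H X, ULe H X z z) ∧
    (∀ x y z : U H X, ULe H X x y → ULe H X y z → ULe H X x z) ∧
    (∀ x y : U H X, ULe H X x y → ULe H X y x → x = y) ∧
    (∀ z : U H X, ULe H X (emb H X Pre.err) z) ∧
    (∀ z : U H X, ULe H X z (emb H X Pre.unk)) := by
  refine ⟨?_, ?_, ?_, ?_, ?_, ?_⟩
  · intro a a' b b' ha hb
    rw [ha, hb]
  · intro z
    induction z using Quot.ind with
    | mk a =>
      cases a with
      | err => exact ULe.err_le _
      | unk => exact ULe.unk_le_unk
      | inj h x => exact ULe.inj_le_inj h x x le_rfl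
  · intro x y z h1 h2
    rcases ule_inv H X h1 with hx | ⟨hx, hy⟩ | ⟨h, a, hx, hy⟩ | ⟨h, a, a', haa', hx, hy⟩
    · rw [hx]; exact ULe.err_le z
    · subst hx; subst hy; exact h2
    · subst hx; subst hy
      rcases ule_inv H X h2 with hy | ⟨_, hz⟩ | ⟨h2', b, hy, hz⟩ | ⟨h2', b, b', _, hy, hz⟩
      · exact absurd hy (unk_ne_err H X)
      · rw [hz]; exact ULe.inj_le_unk h a
      · exact absurd hy.symm (inj_ne_unk H X)
      · exact absurd hy.symm (inj_ne_unk H X)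
    · subst hx; subst hy
      rcases ule_inv H X h2 with hy | ⟨hy, _⟩ | ⟨h2', b, hy, hz⟩ | ⟨h2', b, b', hbb', hy, hz⟩
      · have ha' : a' = ⊥ := inj_eq_err H X hy
        have ha : a = ⊥ := le_antisymm (ha' ▸ haa') bot_le
        rw [ha, emb_bot]; exact ULe.err_le z
      · exact absurd hy (inj_ne_unk H X)
      · rw [hz]; exact ULe.inj_le_unk h a
      · rcases inj_eq_inj H X hy with heq | ⟨ha', hb⟩
        · cases heq
          rw [hz]
          exact ULe.inj_le_inj _ _ _ (le_trans haa' hbb')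
        · have ha : a = ⊥ := le_antisymm (ha' ▸ haa') bot_le
          rw [ha, emb_bot]; exact ULe.err_le z
  · intro x y h1 h2
    rcases ule_inv H X h1 with hx | ⟨hx, hy⟩ | ⟨h, a, hx, hy⟩ | ⟨h, a, a', haa', hx, hy⟩
    · subst hx
      rcases ule_inv H X h2 with hy | ⟨hy, hx⟩ | ⟨h2', b, hy, hx⟩ | ⟨h2', b, b', hbb', hy, hx⟩
      · exact hy.symm
      · exact absurd hx.symm (unk_ne_err H X)
      · exact absurd hx.symm (unk_ne_err H X)
      · have hb' : b' = ⊥ := inj_eq_err H X hx.symm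
        have hb : b = ⊥ := le_antisymm (hb' ▸ hbb') bot_le
        rw [hy, hb, emb_bot]
    · rw [hx, hy]
    · subst hx; subst hy
      rcases ule_inv H X h2 with hy | ⟨hy, hx⟩ | ⟨h2', b, hy, hx⟩ | ⟨h2', b, b', hbb', hy, hx⟩
      · exact absurd hy (unk_ne_err H X)
      · exact absurd hx (inj_ne_unk H X)
      · exact absurd hx (inj_ne_unk H X)
      · exact absurd hy.symm (inj_ne_unk H X)
    · subst hx; subst hy
      rcases ule_inv H X h2 with hy | ⟨hy, hx⟩ | ⟨h2', b, hy, hx⟩ | ⟨h2', b, b', hbb', hy, hx⟩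
      · have ha' : a' = ⊥ := inj_eq_err H X hy
        have ha : a = ⊥ := le_antisymm (ha' ▸ haa') bot_le
        rw [ha, ha', emb_bot]
      · exact absurd hx (inj_ne_unk H X)
      · exact absurd hx (inj_ne_unk H X)
      · rcases inj_eq_inj H X hy with heq | ⟨ha', hb⟩
        · cases heq
          rcases inj_eq_inj H X hx with heq2 | ⟨hb', ha⟩
          · cases heq2
            rw [le_antisymm haa' hbb']
          · have ha'' : a' ≤ (⊥ : X h) := ha ▸ hbb'
            have ha'b : a' = ⊥ := le_antisymm ha'' bot_le
            rw [hb', ha'b, emb_bot]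
        · have ha : a = ⊥ := le_antisymm (ha' ▸ haa') bot_le
          rw [ha, ha', emb_bot]
  · intro z
    exact ULe.err_le z
  · intro z
    induction z using Quot.ind with
    | mk a =>
      cases a with
      | err => exact ULe.err_le _
      | unk => exact ULe.unk_le_unk
      | inj h x => exact ULe.inj_le_unk h x
end

section
/- Let H be a type with decidable equality and X : H → Type a family such that each X h is a partial order with a least element ⊥ₕ and a greatest element ⊤ₕ, and let 𝕌 be the coalesced sum with its precision order ⊑. Fix h : H and define up_h : X h → 𝕌 by up_h x := [⟨h ; x⟩], and down_h : 𝕌 → X h by: down_h [⟨h' ; x⟩] := x (transported along the equality) if h' = h and ⊥ₕ otherwise, down_h [unk] := ⊤ₕ, and down_h [err] := ⊥ₕ. Then down_h is well-defined on the quotient, up_h and down_h are monotone, they form a Galois connection (up_h x ⊑ z ↔ x ≤ down_h z for all x : X h and z : 𝕌), and down_h (up_h x) = x for all x; that is, (up_h, down_h) is an embedding-projection pair from X h to 𝕌. -/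
variable (H : Type*) (X : H → Type*) [∀ h, PartialOrder (X h)] [∀ h, OrderBot (X h)]

/-- `up_h x := [⟨h ; x⟩]`. -/
def upH (h : H) (x : X h) : U H X := emb H X (Pre.inj h x)

variable [DecidableEq H] [∀ h, OrderTop (X h)]

/-- `down_h` on representatives: `⟨h' ; x⟩ ↦ x` (transported) if `h' = h` and
`⊥ₕ` otherwise, `unk ↦ ⊤ₕ`, `err ↦ ⊥ₕ`. -/
def downPre (h : H) : Pre H X → X h
  | Pre.err => ⊥
  | Pre.unk => ⊤
  | Pre.inj h' x => if e : h' = h then e ▸ x else ⊥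

/-- `down_h` is well-defined on the quotient. -/
theorem downPre_respects (h : H) :
    ∀ a b : Pre H X, preRel H X a b → downPre H X h a = downPre H X h b := by
  rintro a b ⟨⟨h', rfl⟩, rfl⟩
  show (if e : h' = h then e ▸ (⊥ : X h') else ⊥) = (⊥ : X h)
  split
  · next e => subst e; rfl
  · rfl

/-- `down_h : 𝕌 → X h`. -/
def downH (h : H) : U H X → X h :=
  Quot.lift (downPre H X h) (downPre_respects H X h)

/-- `(up_h, down_h)` is an embedding-projection pair from the germ
`X h` to the coalesced sum `𝕌`: `down_h` is well-defined on the quotient, both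
maps are monotone, they form a Galois connection, and `down_h ∘ up_h = id`. -/
theorem stmt8 (h : H) :
    (∀ a b : Pre H X, preRel H X a b → downPre H X h a = downPre H X h b) ∧
    (∀ x x' : X h, x ≤ x' → ULe H X (upH H X h x) (upH H X h x')) ∧
    (∀ z z' : U H X, ULe H X z z' → downH H X h z ≤ downH H X h z') ∧
    (∀ (x : X h) (z : U H X), ULe H X (upH H X h x) z ↔ x ≤ downH H X h z) ∧
    (∀ x : X h, downH H X h (upH H X h x) = x) := by
  have hret : ∀ x : X h, downH H X h (upH H X h x) = x := by
    intro x
    show (if e : h = h then e ▸ x else ⊥) = x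
    simp
  have key : ∀ a b : Pre H X, emb H X a = emb H X b →
      downPre H X h a = downPre H X h b := by
    intro a b hab
    exact congrArg (downH H X h) hab
  refine ⟨downPre_respects H X h, ?_, ?_, ?_, hret⟩
  · intro x x' hxx'
    exact ULe.inj_le_inj h x x' hxx'
  · intro z z' hle
    cases hle with
    | err_le z => exact bot_le
    | unk_le_unk => exact le_refl _
    | inj_le_unk h' x =>
        exact le_top
    | inj_le_inj h' x x' hxx' =>
        show (if e : h' = h then e ▸ x else ⊥) ≤ (if e : h' = h then e ▸ x' else ⊥)
        by_cases e : h' = h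
        · subst e; simpa using hxx'
        · simp [e]
  · intro x z
    constructor
    · intro hle
      generalize hu : upH H X h x = u at hle
      cases hle with
      | err_le z =>
          have : downPre H X h (Pre.inj h x) = downPre H X h Pre.err :=
            key _ _ hu
          have hx : x = ⊥ := by
            have := this.symm
            simpa [downPre] using this.symm
          rw [hx]; exact bot_le
      | unk_le_unk => exact le_top
      | inj_le_unk h' x' => exact le_top
      | inj_le_inj h' x1 x2 h12 =>
          have hk : downPre H X h (Pre.inj h x) = downPre H X h (Pre.inj h' x1) :=
            key _ _ hu
          show x ≤ if e : h' = h then e ▸ x2 else ⊥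
          by_cases e : h' = h
          · subst e
            have hx : x = x1 := by simpa [downPre] using hk
            simpa [hx] using h12
          · have hx : x = ⊥ := by simpa [downPre, e] using hk
            simp [e, hx]
    · intro hx
      induction z using Quot.ind with
      | _ a =>
        cases a with
        | err =>
            have hx' : x = ⊥ := le_antisymm (by simpa [downH, downPre] using hx) bot_le
            have : upH H X h x = emb H X Pre.err := by
              rw [hx']
              exact Quot.sound ⟨⟨h, rfl⟩, rfl⟩
            rw [this]; exact ULe.err_le _
        | unk => exact ULe.inj_le_unk h x
        | inj h' x' =>
            by_cases e : h' = h
            · subst e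
              have hx' : x ≤ x' := by simpa [downH, downPre] using hx
              exact ULe.inj_le_inj h' x x' hx'
            · have hx' : x = ⊥ := le_antisymm (by simpa [downH, downPre, e] using hx) bot_le
              have : upH H X h x = emb H X Pre.err := by
                rw [hx']
                exact Quot.sound ⟨⟨h, rfl⟩, rfl⟩
              rw [this]; exact ULe.err_le _
end
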